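/- arXiv:2305.00641 — 6 statements merged into one kernel-verified Lean document; each statement's English description precedes it below -/
import Mathlib

section
/- If ≻_s is acyclic for every s ∈ S, then there exists a stable matching for ≻, and moreover there exists a student optimal stable matching (SOSM) for ≻. -/
/-! Common definitions for school choice with partial priorities
(Kitahara–Okumura, "On extensions of partial priorities in school choice"). -/

/-- A binary relation is asymmetric. -/
def Asymm {I : Type*} (B : I → I → Prop) : Prop :=
  ∀ i j, B i j → ¬ B j i

/-- Negative transitivity. -/
def NegTransitive {I : Type*} (B : I → I → Prop) : Prop :=
  ∀ a b c : I, ¬ B a b → ¬ B b c → ¬ B a c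

/-- Acyclicity: there are no `K ≥ 1` and `x₀, …, x_K` with `(x_{k-1}, x_k) ∈ B` for all
`k = 1, …, K` and `(x_K, x₀) ∈ B`. -/
def AcyclicRel {I : Type*} (B : I → I → Prop) : Prop :=
  ¬ ∃ (K : ℕ) (x : ℕ → I), 1 ≤ K ∧ (∀ k, 1 ≤ k → k ≤ K → B (x (k - 1)) (x k)) ∧ B (x K) (x 0)

/-- A (strict) partial order: an asymmetric relation that is transitive. -/
def PartialOrderRel {I : Type*} (B : I → I → Prop) : Prop :=
  Asymm B ∧ Transitive B

/-- A weak order: a partial order that is negatively transitive. -/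
def WeakOrderRel {I : Type*} (B : I → I → Prop) : Prop :=
  PartialOrderRel B ∧ NegTransitive B

/-- A total order: a weak order that is complete. -/
def TotalOrderRel {I : Type*} (B : I → I → Prop) : Prop :=
  WeakOrderRel B ∧ ∀ a b : I, a ≠ b → B a b ∨ B b a

/-- A strict total order preference over `Option S`, where `none` is the outside option `∅`. -/
def StrictPref {S : Type*} (P : Option S → Option S → Prop) : Prop :=
  Asymm P ∧ Transitive P ∧ ∀ a b : Option S, a ≠ b → P a b ∨ P b a

/-- The weak preference `R` associated with `P`: `a R b` iff `a P b` or `a = b`. -/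
def RPref {S : Type*} (P : Option S → Option S → Prop) (a b : Option S) : Prop :=
  P a b ∨ a = b

/-- A matching: an assignment of students to schools (or `none`) respecting capacities. -/
def IsMatching {I S : Type*} [Fintype I] (q : S → ℕ) (μ : I → Option S) : Prop :=
  ∀ s : S, {i : I | μ i = some s}.ncard ≤ q s

/-- Individual rationality: every student weakly prefers her assignment to `∅`. -/
def IndividuallyRational {I S : Type*} (P : I → Option S → Option S → Prop)
    (μ : I → Option S) : Prop :=
  ∀ i, RPref (P i) (μ i) none

/-- Non-wastefulness: whenever a student strictly prefers `s` to her assignment, `s` is full. -/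
def NonWasteful {I S : Type*} [Fintype I] (P : I → Option S → Option S → Prop) (q : S → ℕ)
    (μ : I → Option S) : Prop :=
  ∀ i s, P i (some s) (μ i) → {j : I | μ j = some s}.ncard = q s

/-- Fairness for the priority profile `pr`: no student's priority is violated. -/
def Fair {I S : Type*} (P : I → Option S → Option S → Prop) (pr : S → I → I → Prop)
    (μ : I → Option S) : Prop :=
  ¬ ∃ (i j : I) (s : S), μ j = some s ∧ μ i ≠ some s ∧ RPref (P i) (some s) (μ i) ∧ pr s i j

/-- Stability for the priority profile `pr`. -/
def StableFor {I S : Type*} [Fintype I] (P : I → Option S → Option S → Prop) (q : S → ℕ)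
    (pr : S → I → I → Prop) (μ : I → Option S) : Prop :=
  IndividuallyRational P μ ∧ NonWasteful P q μ ∧ Fair P pr μ

/-- `μ'` Pareto dominates `μ`. -/
def ParetoDominates {I S : Type*} (P : I → Option S → Option S → Prop)
    (μ' μ : I → Option S) : Prop :=
  (∀ i, RPref (P i) (μ' i) (μ i)) ∧ ∃ i, P i (μ' i) (μ i)

/-- A student optimal stable matching (SOSM) for `pr`. -/
def IsSOSM {I S : Type*} [Fintype I] (P : I → Option S → Option S → Prop) (q : S → ℕ)
    (pr : S → I → I → Prop) (μ : I → Option S) : Prop :=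
  StableFor P q pr μ ∧
    ¬ ∃ μ' : I → Option S, IsMatching q μ' ∧ StableFor P q pr μ' ∧ ParetoDominates P μ' μ

/-- `B'` is a total order extension of `B`. -/
def IsExtension {I : Type*} (B B' : I → I → Prop) : Prop :=
  TotalOrderRel B' ∧ ∀ i j, B i j → B' i j

/-- `pr'` is an extension profile of `pr`. -/
def IsExtensionProfile {I S : Type*} (pr pr' : S → I → I → Prop) : Prop :=
  ∀ s, IsExtension (pr s) (pr' s)

/-- The maximal set `M(I', B)` of elements of `I'` undominated within `I'`. -/
def MaximalSet {I : Type*} (B : I → I → Prop) (I' : Set I) : Set I :=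
  {i ∈ I' | ∀ j ∈ I', j ≠ i → ¬ B j i}

/-- `e` enumerates `I` as a sequential maximal ordering (SMO) sequence for `B`:
each element is chosen from the maximal set of the remaining elements. -/
def IsSMOSeq {I : Type*} [Fintype I] (B : I → I → Prop)
    (e : Fin (Fintype.card I) ≃ I) : Prop :=
  ∀ t, e t ∈ MaximalSet B {i | ∀ t' : Fin (Fintype.card I), t' < t → e t' ≠ i}

/-- The total order induced by an enumeration: earlier elements rank higher. -/
def InducedOrder {I : Type*} [Fintype I] (e : Fin (Fintype.card I) ≃ I) : I → I → Prop :=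
  fun i j => e.symm i < e.symm j

/-- `e` is the `r`-tiebreaking SMO sequence for `B`: at each step it picks the element of the
maximal set of the remaining elements minimizing `r`. -/
def IsRTiebreakSMOSeq {I : Type*} [Fintype I] (B : I → I → Prop)
    (r : I ≃ Fin (Fintype.card I)) (e : Fin (Fintype.card I) ≃ I) : Prop :=
  IsSMOSeq B e ∧
    ∀ t, ∀ i ∈ MaximalSet B {i | ∀ t' : Fin (Fintype.card I), t' < t → e t' ≠ i},
      r (e t) ≤ r i

/-- `pr'` is obtained from `pr` by a single (common) tiebreaking rule: one bijection
`r` from `I` to `{1, …, |I|}` such that every `pr' s` is induced by the `r`-tiebreaking SMO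
sequence for `pr s`. -/
def SingleTiebreakProfile {I S : Type*} [Fintype I] (pr pr' : S → I → I → Prop) : Prop :=
  ∃ r : I ≃ Fin (Fintype.card I), ∀ s : S,
    ∃ e : Fin (Fintype.card I) ≃ I, IsRTiebreakSMOSeq (pr s) r e ∧ pr' s = InducedOrder e

/-- Partial stability for `(pr, C)`: individually rational, non-wasteful, and every priority
violation is allowed by `C`. -/
def PartiallyStable {I S : Type*} [Fintype I] (P : I → Option S → Option S → Prop) (q : S → ℕ)
    (pr : S → I → I → Prop) (C : S → I → I → Prop) (μ : I → Option S) : Prop :=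
  IndividuallyRational P μ ∧ NonWasteful P q μ ∧
    ∀ (i j : I) (s : S), μ j = some s → P i (some s) (μ i) → pr s i j → C s i j

/-! Among the individually rational and fair matchings (the empty matching is one, and there are
finitely many) take one maximising the sum over students of the number of alternatives ranked below
their assignment. No fair matching Pareto dominates it, so once it is stable it is a student
optimal stable matching. It is non-wasteful: if a seat at `s` is free while some student prefers
`s` to her assignment, then, `≻_s` being acyclic and hence well-founded on the finite set of
students, some such student has no rival with higher priority at `s`; moving her to `s` keeps the
matching fair and Pareto improves it. -/

open Function Relation

section Acyclic

variable {α : Type*} {B : α → α → Prop}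

lemma exists_chain_of_transGen {a b : α} (hab : TransGen B a b) :
    ∃ (n : ℕ) (x : ℕ → α), x 0 = a ∧ x (n + 1) = b ∧ ∀ k ≤ n, B (x k) (x (k + 1)) := by
  induction hab using TransGen.head_induction_on with
  | @single a hab => exact ⟨0, fun k => Nat.casesOn k a fun _ => b, rfl, rfl, by simpa using hab⟩
  | @head a c hac _ ih =>
    obtain ⟨n, x, hx0, hxn, hx⟩ := ih
    refine ⟨n + 1, fun k => Nat.casesOn k a x, rfl, hxn, ?_⟩
    rintro (_ | k) hk
    · simpa [hx0] using hac
    · exact hx k (by omega)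

lemma AcyclicRel.not_transGen_self (h : AcyclicRel B) (a : α) : ¬ TransGen B a a := by
  intro haa
  obtain ⟨n, x, hx0, hxn, hx⟩ := exists_chain_of_transGen haa
  rcases Nat.eq_zero_or_pos n with rfl | hn
  · have haa := hx 0 le_rfl
    rw [hxn, hx0] at haa
    exact h ⟨1, fun _ => a, le_rfl, fun _ _ _ => haa, haa⟩
  · refine h ⟨n, x, hn, fun k hk1 hkn => ?_, ?_⟩
    · simpa [Nat.sub_add_cancel hk1] using hx (k - 1) (by omega)
    · rw [hx0, ← hxn]
      exact hx n le_rfl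

lemma AcyclicRel.wellFounded [Finite α] (h : AcyclicRel B) : WellFounded B :=
  haveI : Std.Irrefl (TransGen B) := ⟨h.not_transGen_self⟩
  Subrelation.wf TransGen.single (Finite.wellFounded_of_trans_of_irrefl _)

end Acyclic

section Preference

variable {S : Type*} {P : Option S → Option S → Prop}

lemma StrictPref.ne (hP : StrictPref P) {a b : Option S} (h : P a b) : a ≠ b := by
  rintro rfl
  exact hP.1 a a h h

noncomputable def prefRank (P : Option S → Option S → Prop) (a : Option S) : ℕ :=
  {b | P a b}.ncard

variable [Finite S]

lemma prefRank_lt_of_pref (hP : StrictPref P) {a b : Option S} (h : P a b) :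
    prefRank P b < prefRank P a :=
  Set.ncard_lt_ncard ⟨fun _ hc => hP.2.1 h hc, fun hsub => hP.1 b b (hsub h) (hsub h)⟩

lemma prefRank_le_of_rPref (hP : StrictPref P) {a b : Option S} (h : RPref P a b) :
    prefRank P b ≤ prefRank P a := by
  rcases h with h | rfl
  exacts [(prefRank_lt_of_pref hP h).le, le_rfl]

end Preference

section Matching

variable {I S : Type*} {P : I → Option S → Option S → Prop} {q : S → ℕ}
  {pr : S → I → I → Prop} {μ : I → Option S}

lemma fair_iff (hP : ∀ i, StrictPref (P i)) :
    Fair P pr μ ↔ ∀ i j s, μ j = some s → P i (some s) (μ i) → ¬ pr s i j := by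
  constructor
  · exact fun hF i j s hj hi hij => hF ⟨i, j, s, hj, ((hP i).ne hi).symm, Or.inl hi, hij⟩
  · rintro hF ⟨i, j, s, hj, hne, hR, hij⟩
    exact hF i j s hj (hR.resolve_right hne.symm) hij

section Update

variable [DecidableEq I] {i : I} {s : S}

lemma IsMatching.update [Fintype I] (hμ : IsMatching q μ) (hs : {j | μ j = some s}.ncard < q s) :
    IsMatching q (update μ i (some s)) := by
  intro t
  by_cases hts : t = s
  · subst hts
    have hsub : {j | update μ i (some t) j = some t} ⊆ insert i {j | μ j = some t} := by
      intro j hj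
      rcases eq_or_ne j i with rfl | hji
      exacts [Set.mem_insert _ _, Or.inr (by simpa [update_of_ne hji] using hj)]
    calc _ ≤ (insert i {j | μ j = some t}).ncard := Set.ncard_le_ncard hsub
      _ ≤ _ := (Set.ncard_insert_le _ _).trans hs
  · refine le_trans (Set.ncard_le_ncard fun j hj => ?_) (hμ t)
    rcases eq_or_ne j i with rfl | hji
    · simp only [Set.mem_ofPred_eq, update_self, Option.some.injEq] at hj
      exact (hts hj.symm).elim
    · simpa [update_of_ne hji] using hj

lemma IndividuallyRational.update (hP : ∀ i, StrictPref (P i)) (hμ : IndividuallyRational P μ)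
    (hi : P i (some s) (μ i)) : IndividuallyRational P (update μ i (some s)) := by
  intro j
  rcases eq_or_ne j i with rfl | hji
  · rw [update_self]
    rcases hμ j with h | h
    exacts [Or.inl ((hP j).2.1 hi h), Or.inl (h ▸ hi)]
  · rw [update_of_ne hji]
    exact hμ j

lemma Fair.update (hP : ∀ i, StrictPref (P i)) (hμ : Fair P pr μ) (hi : P i (some s) (μ i))
    (hmax : ∀ k, P k (some s) (μ k) → ¬ pr s k i) : Fair P pr (update μ i (some s)) := by
  rw [fair_iff hP] at hμ ⊢
  intro k j t hj hk hkj
  rcases eq_or_ne j i with rfl | hji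
  · obtain rfl : t = s := by simpa using hj.symm
    have hkj' : k ≠ j := by
      rintro rfl
      simp only [update_self] at hk
      exact (hP k).ne hk rfl
    rw [update_of_ne hkj'] at hk
    exact hmax k hk hkj
  · rw [update_of_ne hji] at hj
    rcases eq_or_ne k i with rfl | hki
    · rw [update_self] at hk
      exact hμ k j t hj ((hP k).2.1 hk hi) hkj
    · rw [update_of_ne hki] at hk
      exact hμ k j t hj hk hkj

lemma paretoDominates_update (hi : P i (some s) (μ i)) :
    ParetoDominates P (update μ i (some s)) μ := by
  refine ⟨fun j => ?_, i, by rwa [update_self]⟩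
  rcases eq_or_ne j i with rfl | hji
  exacts [Or.inl (by rwa [update_self]), Or.inr (update_of_ne hji _ _)]

end Update

variable [Fintype I]

noncomputable def welfare (P : I → Option S → Option S → Prop) (μ : I → Option S) : ℕ :=
  ∑ i, prefRank (P i) (μ i)

lemma ParetoDominates.welfare_lt [Finite S] (hP : ∀ i, StrictPref (P i)) {μ' : I → Option S}
    (h : ParetoDominates P μ' μ) : welfare P μ < welfare P μ' := by
  obtain ⟨hweak, i, hi⟩ := h
  exact Finset.sum_lt_sum (fun j _ => prefRank_le_of_rPref (hP j) (hweak j))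
    ⟨i, Finset.mem_univ i, prefRank_lt_of_pref (hP i) hi⟩

def IsFairMatching (P : I → Option S → Option S → Prop) (q : S → ℕ) (pr : S → I → I → Prop)
    (μ : I → Option S) : Prop :=
  IsMatching q μ ∧ IndividuallyRational P μ ∧ Fair P pr μ

lemma isFairMatching_none : IsFairMatching P q pr fun _ => none := by
  refine ⟨fun s => by simp, fun _ => Or.inr rfl, ?_⟩
  rintro ⟨_, _, _, h, -⟩
  cases h

lemma IsFairMatching.exists_paretoDominates_of_not_nonWasteful (hP : ∀ i, StrictPref (P i))
    (hwf : ∀ s, WellFounded (pr s)) (hμ : IsFairMatching P q pr μ) (hw : ¬ NonWasteful P q μ) :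
    ∃ μ', IsFairMatching P q pr μ' ∧ ParetoDominates P μ' μ := by
  classical
  obtain ⟨hM, hIR, hF⟩ := hμ
  simp only [NonWasteful, not_forall] at hw
  obtain ⟨i₀, s, hi₀, hfree⟩ := hw
  obtain ⟨i, hi, hmax⟩ := (hwf s).has_min {k | P k (some s) (μ k)} ⟨i₀, hi₀⟩
  exact ⟨_, ⟨hM.update ((hM s).lt_of_ne hfree), hIR.update hP hi, hF.update hP hi hmax⟩,
    paretoDominates_update hi⟩

lemma exists_isFairMatching_forall_not_paretoDominates [Finite S] (hP : ∀ i, StrictPref (P i)) :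
    ∃ μ, IsFairMatching P q pr μ ∧
      ∀ μ', IsFairMatching P q pr μ' → ¬ ParetoDominates P μ' μ := by
  obtain ⟨μ, hμ, hmax⟩ := Set.Finite.exists_maximalFor (welfare P)
    {μ | IsFairMatching P q pr μ} (Set.toFinite _) ⟨_, isFairMatching_none⟩
  refine ⟨μ, hμ, fun μ' hμ' hdom => ?_⟩
  have hlt := hdom.welfare_lt hP
  exact hlt.not_ge (hmax hμ' hlt.le)

end Matching

theorem exists_stable_and_sosm_of_acyclic_general {I S : Type*} [Fintype I] [Fintype S]
    (P : I → Option S → Option S → Prop) (hP : ∀ i, StrictPref (P i))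
    (q : S → ℕ)
    (pr : S → I → I → Prop)
    (hacyc : ∀ s, AcyclicRel (pr s)) :
    (∃ μ : I → Option S, IsMatching q μ ∧ StableFor P q pr μ) ∧
      ∃ μ : I → Option S, IsMatching q μ ∧ IsSOSM P q pr μ := by
  obtain ⟨μ, hμ, hopt⟩ := exists_isFairMatching_forall_not_paretoDominates (q := q) (pr := pr) hP
  have hNW : NonWasteful P q μ := by
    by_contra hw
    obtain ⟨μ', hμ', hdom⟩ := hμ.exists_paretoDominates_of_not_nonWasteful hP
      (fun s => (hacyc s).wellFounded) hw
    exact hopt μ' hμ' hdom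
  have hstable : StableFor P q pr μ := ⟨hμ.2.1, hNW, hμ.2.2⟩
  exact ⟨⟨μ, hμ.1, hstable⟩, μ, hμ.1, hstable,
    fun ⟨μ', hM, hS, hdom⟩ => hopt μ' ⟨hM, hS.1, hS.2.2⟩ hdom⟩

/-- Corollary 1: if every priority relation is acyclic, then a stable matching
for `pr` exists, and moreover a student optimal stable matching for `pr` exists. -/
theorem exists_stable_and_sosm_of_acyclic {I S : Type*} [Fintype I] [Fintype S]
    (hI : 3 ≤ Fintype.card I)
    (P : I → Option S → Option S → Prop) (hP : ∀ i, StrictPref (P i))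
    (q : S → ℕ) (hq : ∀ s, 1 ≤ q s)
    (pr : S → I → I → Prop)
    (hasym : ∀ s, Asymm (pr s)) (hacyc : ∀ s, AcyclicRel (pr s)) :
    (∃ μ : I → Option S, IsMatching q μ ∧ StableFor P q pr μ) ∧
      ∃ μ : I → Option S, IsMatching q μ ∧ IsSOSM P q pr μ :=
  exists_stable_and_sosm_of_acyclic_general P hP q pr hacyc
end

section
/- Suppose ≻_s is a partial order (asymmetric and transitive) for every s ∈ S, and μ₁, …, μ_K (K ≥ 1) are stable matchings for ≻ such that μ_{k'} Pareto dominates μ_k whenever 1 ≤ k < k' ≤ K. For each k ∈ {1, …, K} and s ∈ S define A_s^k = { (i,j) ∈ I × I : μ_k(i) = s and s P_j μ_k(j) } and ≻'_s = ≻_s ∪ ⋃_{k=1}^K A_s^k. Then for every s ∈ S the relation ≻'_s is acyclic. -/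
/-! Fix the school `s`. Say that student `x` weakly outranks a seat holder in round `k` if some
student assigned to `s` by `μ k` is `x` itself or is ranked below `x` by `≻_s`; by fairness `x`
then does not envy `s` in round `k`, nor, since students only improve along the chain, in any
later round. Hence the first such round, `firstOutrankRound x`, is at most `k` at `a` and beyond
`k` at `b` for every edge `(a, b)` of `A_s^k`, while it is monotone along `≻_s`. A cycle of
`≻'_s` would therefore consist of `≻_s`-edges only, which is impossible for a strict partial
order. -/

theorem AcyclicRel.of_le {I : Type*} {B C : I → I → Prop}
    (hC : ∀ ⦃a b c⦄, C a b → C b c → C a c) (hCirr : ∀ a, ¬ C a a)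
    (hBC : ∀ a b, B a b → C a b) : AcyclicRel B := by
  rintro ⟨n, x, hn, hstep, hback⟩
  have hpath : ∀ m (hm : 1 ≤ m), m ≤ n → C (x 0) (x m) := by
    intro m hm
    induction m, hm using Nat.le_induction with
    | base => exact fun h1n => hBC _ _ (hstep 1 le_rfl h1n)
    | succ m hm ih =>
      exact fun hmn => hC (ih (by omega)) (hBC _ _ (hstep (m + 1) (by omega) hmn))
  exact hCirr _ (hC (hpath n hn le_rfl) (hBC _ _ hback))

theorem AcyclicRel.or_of_potential {I α : Type*} [Preorder α] {R T : I → I → Prop}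
    (Φ : I → α) (hR : ∀ ⦃a b c⦄, R a b → R b c → R a c) (hRirr : ∀ a, ¬ R a a)
    (hRΦ : ∀ a b, R a b → Φ a ≤ Φ b) (hTΦ : ∀ a b, T a b → Φ a < Φ b) :
    AcyclicRel fun a b => R a b ∨ T a b := by
  refine AcyclicRel.of_le (C := fun a b => R a b ∨ Φ a < Φ b) ?_ ?_ ?_
  · rintro a b c (hab | hab) (hbc | hbc)
    · exact Or.inl (hR hab hbc)
    · exact Or.inr ((hRΦ a b hab).trans_lt hbc)
    · exact Or.inr (hab.trans_le (hRΦ b c hbc))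
    · exact Or.inr (hab.trans hbc)
  · rintro a (h | h)
    exacts [hRirr a h, lt_irrefl _ h]
  · rintro a b (h | h)
    exacts [Or.inl h, Or.inr (hTΦ a b h)]

theorem Asymm.irreflexive {I : Type*} {B : I → I → Prop} (h : Asymm B) : ∀ a, ¬ B a a :=
  fun a haa => h a a haa haa

theorem trans_rpref {S : Type*} {p : Option S → Option S → Prop}
    (hp : ∀ ⦃a b c⦄, p a b → p b c → p a c) {a b c : Option S} (hab : p a b)
    (hbc : RPref p b c) : p a c := by
  rcases hbc with hbc | rfl
  exacts [hp hab hbc, hab]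

section SchoolPotential

open scoped Classical

variable {I S ι : Type*}

def WeaklyOutranksAssigned (pr : S → I → I → Prop) (ν : I → Option S) (s : S) (x : I) :
    Prop :=
  ∃ z, Relation.ReflGen (pr s) x z ∧ ν z = some s

theorem Fair.not_envies_of_weaklyOutranksAssigned {P : I → Option S → Option S → Prop}
    {pr : S → I → I → Prop} {ν : I → Option S} {s : S} {x : I} (hfair : Fair P pr ν)
    (hirr : ∀ a, ¬ P x a a) (h : WeaklyOutranksAssigned pr ν s x) :
    ¬ P x (some s) (ν x) := by
  rintro henvy
  obtain ⟨z, _ | hxz, hz⟩ := h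
  · exact hirr _ (hz ▸ henvy)
  · exact hfair ⟨x, z, s, hz, fun hx => hirr _ (hx ▸ henvy), Or.inl henvy, hxz⟩

noncomputable def firstOutrankRound [Fintype ι] [LinearOrder ι] (pr : S → I → I → Prop)
    (μ : ι → I → Option S) (s : S) (x : I) : WithTop ι :=
  (Finset.univ.filter fun k => WeaklyOutranksAssigned pr (μ k) s x).inf (↑)

variable [Fintype ι] [LinearOrder ι] {pr : S → I → I → Prop} {μ : ι → I → Option S}
  {s : S}

theorem firstOutrankRound_le_of_assigned {k : ι} {x : I} (h : μ k x = some s) :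
    firstOutrankRound pr μ s x ≤ k :=
  Finset.inf_le (Finset.mem_filter.2 ⟨Finset.mem_univ k, x, .refl, h⟩)

theorem firstOutrankRound_le_of_pr (htrans : ∀ ⦃a b c⦄, pr s a b → pr s b c → pr s a c)
    {x y : I} (hxy : pr s x y) : firstOutrankRound pr μ s x ≤ firstOutrankRound pr μ s y := by
  refine Finset.inf_mono fun k hk => ?_
  obtain ⟨-, z, hyz, hz⟩ := Finset.mem_filter.1 hk
  refine Finset.mem_filter.2 ⟨Finset.mem_univ k, z, ?_, hz⟩
  rcases hyz with _ | hyz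
  exacts [.single hxy, .single (htrans hxy hyz)]

theorem lt_firstOutrankRound_of_envies {P : I → Option S → Option S → Prop} {k : ι} {x : I}
    (htrans : ∀ ⦃a b c⦄, P x a b → P x b c → P x a c) (hirr : ∀ a, ¬ P x a a)
    (hfair : ∀ k', Fair P pr (μ k')) (hmono : ∀ k' ≤ k, RPref (P x) (μ k x) (μ k' x))
    (henvy : P x (some s) (μ k x)) : (k : WithTop ι) < firstOutrankRound pr μ s x := by
  refine (Finset.lt_inf_iff (WithTop.coe_lt_top k)).2 fun k' hk' => WithTop.coe_lt_coe.2 ?_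
  by_contra! hk'k
  exact (hfair k').not_envies_of_weaklyOutranksAssigned hirr (Finset.mem_filter.1 hk').2
    (trans_rpref htrans henvy (hmono k' hk'k))

end SchoolPotential

theorem union_with_dominance_relations_acyclic_general {I S : Type*} [Fintype I]
    (P : I → Option S → Option S → Prop) (hP : ∀ i, StrictPref (P i))
    (q : S → ℕ)
    (pr : S → I → I → Prop) (hpr : ∀ s, PartialOrderRel (pr s))
    (K : ℕ) (μ : Fin K → I → Option S)
    (hstable : ∀ k, StableFor P q pr (μ k))
    (hdom : ∀ k k' : Fin K, k < k' → ParetoDominates P (μ k') (μ k)) :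
    ∀ s : S, AcyclicRel
      (fun i j => pr s i j ∨ ∃ k : Fin K, μ k i = some s ∧ P j (some s) (μ k j)) := by
  intro s
  have hmono : ∀ k' k : Fin K, k' ≤ k → ∀ i, RPref (P i) (μ k i) (μ k' i) := by
    intro k' k hk' i
    rcases hk'.lt_or_eq with hlt | rfl
    exacts [(hdom k' k hlt).1 i, Or.inr rfl]
  refine AcyclicRel.or_of_potential (firstOutrankRound pr μ s) (hpr s).2 (hpr s).1.irreflexive
    (fun _ _ => firstOutrankRound_le_of_pr (hpr s).2) ?_
  rintro a b ⟨k, ha, hb⟩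
  exact (firstOutrankRound_le_of_assigned ha).trans_lt <|
    lt_firstOutrankRound_of_envies (hP b).2.1 (hP b).1.irreflexive (fun k' => (hstable k').2.2)
      (fun k' hk' => hmono k' k hk' b) hb

/-- Lemma 2, acyclicity: with partial order priorities and a Pareto-ranked chain
of stable matchings, the union of `pr s` with all relations
`A_s^k = {(i,j) | μ k i = s and s P_j μ k j}` is acyclic for every school `s`. -/
theorem union_with_dominance_relations_acyclic {I S : Type*} [Fintype I] [Fintype S]
    (hI : 3 ≤ Fintype.card I)
    (P : I → Option S → Option S → Prop) (hP : ∀ i, StrictPref (P i))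
    (q : S → ℕ) (hq : ∀ s, 1 ≤ q s)
    (pr : S → I → I → Prop) (hpr : ∀ s, PartialOrderRel (pr s))
    (K : ℕ) (hK : 1 ≤ K) (μ : Fin K → I → Option S)
    (hmatch : ∀ k, IsMatching q (μ k))
    (hstable : ∀ k, StableFor P q pr (μ k))
    (hdom : ∀ k k' : Fin K, k < k' → ParetoDominates P (μ k') (μ k)) :
    ∀ s : S, AcyclicRel
      (fun i j => pr s i j ∨ ∃ k : Fin K, μ k i = some s ∧ P j (some s) (μ k j)) :=
  union_with_dominance_relations_acyclic_general P hP q pr hpr K μ hstable hdom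
end

section
/- Suppose ≻_s is a partial order (asymmetric and transitive) for every s ∈ S, and μ₁, …, μ_K (K ≥ 1) are stable matchings for ≻ such that μ_{k'} Pareto dominates μ_k whenever 1 ≤ k < k' ≤ K. For each k ∈ {1, …, K} and s ∈ S define A_s^k = { (i,j) ∈ I × I : μ_k(i) = s and s P_j μ_k(j) } and ≻'_s = ≻_s ∪ ⋃_{k=1}^K A_s^k. Then for every s ∈ S the relation ≻'_s is asymmetric: (i,j) ∈ ≻'_s implies (j,i) ∉ ≻'_s. -/
/-!
A pair lying in `pr s` and, reversed, in `A_s^k` is a priority violation of `μ k`, which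
fairness excludes. If `(i, j) ∈ A_s^k` and `(j, i) ∈ A_s^{k'}` with `k ≤ k'`, then `i` holds a
seat at `s` under `μ k` yet strictly prefers `s` to her assignment under `μ k'`, which she
weakly prefers to `μ k i = s`.
-/

/-- The relation `A_s^k` of the paper, for `μ = μ_k`. -/
def DominanceRel {I S : Type*} (P : I → Option S → Option S → Prop) (μ : I → Option S)
    (s : S) (i j : I) : Prop :=
  μ i = some s ∧ P j (some s) (μ j)

section

variable {I S : Type*}

theorem Asymm.irrefl {B : I → I → Prop} (hB : Asymm B) (i : I) : ¬ B i i :=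
  fun h => hB i i h h

theorem RPref.not_pref_swap {P : Option S → Option S → Prop} (hP : Asymm P)
    {a b : Option S} (h : RPref P a b) : ¬ P b a := by
  rcases h with hab | rfl
  · exact hP a b hab
  · exact hP.irrefl a

theorem Fair.not_pr_of_dominanceRel {P : I → Option S → Option S → Prop}
    {pr : S → I → I → Prop} {μ : I → Option S} (hμ : Fair P pr μ) {s : S} {i j : I}
    (hP : Asymm (P i)) (hji : DominanceRel P μ s j i) : ¬ pr s i j := by
  intro hpr
  have hne : μ i ≠ some s := fun h => hP.irrefl _ (h ▸ hji.2)
  exact hμ ⟨i, j, s, hji.1, hne, Or.inl hji.2, hpr⟩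

theorem not_dominanceRel_swap_of_rpref {P : I → Option S → Option S → Prop}
    {μ μ' : I → Option S} {s : S} {i j : I} (hP : Asymm (P i))
    (hi : RPref (P i) (μ' i) (μ i)) (hij : DominanceRel P μ s i j) :
    ¬ DominanceRel P μ' s j i := by
  rintro ⟨-, hpref⟩
  rw [hij.1] at hi
  exact hi.not_pref_swap hP hpref

theorem rpref_of_le_of_paretoDominates {ι : Type*} [PartialOrder ι]
    {P : I → Option S → Option S → Prop} {μ : ι → I → Option S}
    (hdom : ∀ k k', k < k' → ParetoDominates P (μ k') (μ k)) {k k' : ι} (h : k ≤ k')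
    (a : I) : RPref (P a) (μ k' a) (μ k a) := by
  rcases h.lt_or_eq with hlt | rfl
  · exact (hdom k k' hlt).1 a
  · exact Or.inr rfl

end

theorem union_with_dominance_relations_asymm_general {I S : Type*} [Fintype I]
    (P : I → Option S → Option S → Prop) (hP : ∀ i, StrictPref (P i))
    (q : S → ℕ)
    (pr : S → I → I → Prop) (hpr : ∀ s, PartialOrderRel (pr s))
    (K : ℕ) (μ : Fin K → I → Option S)
    (hstable : ∀ k, StableFor P q pr (μ k))
    (hdom : ∀ k k' : Fin K, k < k' → ParetoDominates P (μ k') (μ k)) :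
    ∀ (s : S) (i j : I),
      (pr s i j ∨ ∃ k : Fin K, μ k i = some s ∧ P j (some s) (μ k j)) →
      ¬ (pr s j i ∨ ∃ k : Fin K, μ k j = some s ∧ P i (some s) (μ k i)) := by
  intro s i j hij hji
  have hPasymm : ∀ a, Asymm (P a) := fun a => (hP a).1
  rcases hij with hij | ⟨k, hk⟩ <;> rcases hji with hji | ⟨k', hk'⟩
  · exact (hpr s).1 i j hij hji
  · exact (hstable k').2.2.not_pr_of_dominanceRel (hPasymm i) hk' hij
  · exact (hstable k).2.2.not_pr_of_dominanceRel (hPasymm j) hk hji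
  · rcases le_total k k' with h | h
    · exact not_dominanceRel_swap_of_rpref (hPasymm i)
        (rpref_of_le_of_paretoDominates hdom h i) hk hk'
    · exact not_dominanceRel_swap_of_rpref (hPasymm j)
        (rpref_of_le_of_paretoDominates hdom h j) hk' hk

/-- Lemma 2, asymmetry: with partial order priorities and a Pareto-ranked chain
of stable matchings, the union of `pr s` with all relations
`A_s^k = {(i,j) | μ k i = s and s P_j μ k j}` is asymmetric for every school `s`. -/
theorem union_with_dominance_relations_asymm {I S : Type*} [Fintype I] [Fintype S]
    (hI : 3 ≤ Fintype.card I)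
    (P : I → Option S → Option S → Prop) (hP : ∀ i, StrictPref (P i))
    (q : S → ℕ) (hq : ∀ s, 1 ≤ q s)
    (pr : S → I → I → Prop) (hpr : ∀ s, PartialOrderRel (pr s))
    (K : ℕ) (hK : 1 ≤ K) (μ : Fin K → I → Option S)
    (hmatch : ∀ k, IsMatching q (μ k))
    (hstable : ∀ k, StableFor P q pr (μ k))
    (hdom : ∀ k k' : Fin K, k < k' → ParetoDominates P (μ k') (μ k)) :
    ∀ (s : S) (i j : I),
      (pr s i j ∨ ∃ k : Fin K, μ k i = some s ∧ P j (some s) (μ k j)) →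
      ¬ (pr s j i ∨ ∃ k : Fin K, μ k j = some s ∧ P i (some s) (μ k i)) :=
  union_with_dominance_relations_asymm_general P hP q pr hpr K μ hstable hdom
end

section
/- Let μ be a matching that is stable for the priority profile ≻ (each ≻_s an asymmetric binary relation on I). For each s ∈ S define A_s^μ = { (i,j) ∈ I × I : μ(i) = s and s P_j μ(j) }. Then for every profile ≻'' = (≻''_s)_{s∈S} of total orders on I with ≻_s ∪ A_s^μ ⊆ ≻''_s for all s ∈ S, the matching μ is stable for ≻''. -/
theorem Fair.of_asymm_of_augmented {I S : Type*} (P : I → Option S → Option S → Prop)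
    (B : S → I → I → Prop) (μ : I → Option S) (hB : ∀ s, Asymm (B s))
    (hA : ∀ (s : S) (i j : I), μ i = some s → P j (some s) (μ j) → B s i j) :
    Fair P B μ := by
  rintro ⟨i, j, s, hjs, his, hRi, hij⟩
  have hPi : P i (some s) (μ i) := hRi.resolve_right fun h => his h.symm
  exact hB s i j hij (hA s j i hjs hPi)

theorem stable_for_total_orders_containing_augmented_general {I S : Type*} [Fintype I]
    (P : I → Option S → Option S → Prop)
    (q : S → ℕ)
    (pr : S → I → I → Prop)
    (μ : I → Option S) (hstable : StableFor P q pr μ)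
    (pr'' : S → I → I → Prop) (hto : ∀ s, TotalOrderRel (pr'' s))
    (hsub : ∀ (s : S) (i j : I),
      (pr s i j ∨ (μ i = some s ∧ P j (some s) (μ j))) → pr'' s i j) :
    StableFor P q pr'' μ :=
  ⟨hstable.1, hstable.2.1, Fair.of_asymm_of_augmented P pr'' μ (fun s => (hto s).1.1.1)
    fun s i j hi hj => hsub s i j (Or.inr ⟨hi, hj⟩)⟩

/-- Erdil–Ergin observation: if `μ` is stable for `pr`, then `μ` is stable for
every profile of total orders containing `pr s ∪ A_s^μ` for each school `s`, where
`A_s^μ = {(i,j) | μ i = s and s P_j μ j}`. -/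
theorem stable_for_total_orders_containing_augmented {I S : Type*} [Fintype I] [Fintype S]
    (hI : 3 ≤ Fintype.card I)
    (P : I → Option S → Option S → Prop) (hP : ∀ i, StrictPref (P i))
    (q : S → ℕ) (hq : ∀ s, 1 ≤ q s)
    (pr : S → I → I → Prop) (hpr : ∀ s, Asymm (pr s))
    (μ : I → Option S) (hμ : IsMatching q μ) (hstable : StableFor P q pr μ)
    (pr'' : S → I → I → Prop) (hto : ∀ s, TotalOrderRel (pr'' s))
    (hsub : ∀ (s : S) (i j : I),
      (pr s i j ∨ (μ i = some s ∧ P j (some s) (μ j))) → pr'' s i j) :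
    StableFor P q pr'' μ :=
  stable_for_total_orders_containing_augmented_general P q pr μ hstable pr'' hto hsub
end

section
/- Suppose ≻_s is a weak order (asymmetric, transitive and negatively transitive) for every s ∈ S. Then for every student optimal stable matching (SOSM) μ for ≻ there exists an extension profile ≻' of ≻ obtained by a single tiebreaking rule such that μ is an SOSM for ≻'. -/
/-! At an SOSM, call the envy of `i` for `j` *tied* if `i` prefers `j`'s school and the two are
tied in its priority. Tied envy is acyclic: exchanging seats along a cycle would be a Pareto
improvement that is still stable. So one ranking `r` of all students puts every envied student
ahead of her envier. Breaking the ties of every school by `r` creates no justified envy at `μ`,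
and since the tie-broken priorities only add comparisons, a stable Pareto improvement for them
would be one for the original priorities. -/

open Relation

section Orders

variable {I : Type*}

theorem PartialOrderRel.isStrictOrder {B : I → I → Prop} (hB : PartialOrderRel B) :
    IsStrictOrder I B where
  irrefl i h := hB.1 i i h h
  trans _ _ _ h h' := hB.2 h h'

theorem negTransitive_of_total {B : I → I → Prop} (hB : PartialOrderRel B)
    (htot : ∀ a b : I, a ≠ b → B a b ∨ B b a) : NegTransitive B := by
  intro a b c hab hbc hac
  rcases eq_or_ne a b with rfl | hne
  · exact hbc hac
  · exact (htot a b hne).elim hab fun hba => hbc (hB.2 hba hac)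

theorem exists_equiv_fin_lt_of_isStrictOrder [Fintype I] (T : I → I → Prop)
    [IsStrictOrder I T] : ∃ r : I ≃ Fin (Fintype.card I), ∀ i j, T i j → r i < r j := by
  let := partialOrderOfSO T
  let : Fintype (LinearExtension I) := ‹Fintype I›
  let o := Fintype.orderIsoFinOfCardEq (LinearExtension I) rfl
  refine ⟨o.symm.toEquiv, fun i j hij => o.symm.lt_iff_lt.2 ?_⟩
  exact toLinearExtension.monotone.strictMono_of_injective (fun _ _ h => h) (show i < j from hij)

theorem exists_equiv_fin_lt_of_acyclic [Fintype I] {E : I → I → Prop}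
    (hE : ∀ x, ¬ TransGen E x x) :
    ∃ r : I ≃ Fin (Fintype.card I), ∀ i j, E i j → r i < r j := by
  have : IsStrictOrder I (TransGen E) := { irrefl := hE, trans := fun _ _ _ => TransGen.trans }
  obtain ⟨r, hr⟩ := exists_equiv_fin_lt_of_isStrictOrder (TransGen E)
  exact ⟨r, fun i j hij => hr i j (.single hij)⟩

theorem exists_inducedOrder_eq [Fintype I] {T : I → I → Prop} (hT : TotalOrderRel T) :
    ∃ e : Fin (Fintype.card I) ≃ I, InducedOrder e = T := by
  have := hT.1.1.isStrictOrder
  obtain ⟨r, hr⟩ := exists_equiv_fin_lt_of_isStrictOrder T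
  refine ⟨r.symm, funext₂ fun i j => propext ⟨fun hlt => ?_, hr i j⟩⟩
  rcases eq_or_ne i j with rfl | hne
  · exact absurd hlt (lt_irrefl _)
  · exact (hT.2 i j hne).resolve_right fun hji => (hr j i hji).not_gt hlt

end Orders

def Tiebreak {I : Type*} [Fintype I] (B : I → I → Prop) (r : I ≃ Fin (Fintype.card I)) :
    I → I → Prop :=
  fun i j => B i j ∨ (¬ B j i ∧ r i < r j)

section Tiebreak

variable {I : Type*} [Fintype I] {B : I → I → Prop}

theorem totalOrderRel_tiebreak (hB : WeakOrderRel B) (r : I ≃ Fin (Fintype.card I)) :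
    TotalOrderRel (Tiebreak B r) := by
  obtain ⟨⟨hasymm, htrans⟩, hneg⟩ := hB
  have hpartial : PartialOrderRel (Tiebreak B r) := by
    refine ⟨?_, ?_⟩
    · rintro i j (hij | ⟨hji, hr⟩) (hji' | ⟨hij', hr'⟩)
      exacts [hasymm _ _ hij hji', hij' hij, hji hji', hr.not_gt hr']
    · rintro i j k (hij | ⟨hji, hrij⟩) (hjk | ⟨hkj, hrjk⟩)
      · exact .inl (htrans hij hjk)
      · exact .inl (by_contra fun hik => hneg i k j hik hkj hij)
      · exact .inl (by_contra fun hik => hneg j i k hji hik hjk)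
      · exact .inr ⟨hneg k j i hkj hji, hrij.trans hrjk⟩
  have htot : ∀ a b : I, a ≠ b → Tiebreak B r a b ∨ Tiebreak B r b a := by
    intro a b hab
    by_cases hab' : B a b
    · exact .inl (.inl hab')
    by_cases hba : B b a
    · exact .inr (.inl hba)
    rcases lt_or_gt_of_ne (r.injective.ne hab) with h | h
    exacts [.inl (.inr ⟨hba, h⟩), .inr (.inr ⟨hab', h⟩)]
  exact ⟨⟨hpartial, negTransitive_of_total hpartial htot⟩, htot⟩

theorem setOf_forall_lt_apply_ne_eq (e : Fin (Fintype.card I) ≃ I) (t : Fin (Fintype.card I)) :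
    {i | ∀ t' : Fin (Fintype.card I), t' < t → e t' ≠ i} = {i | t ≤ e.symm i} := by
  ext i
  simp only [Set.mem_ofPred_eq, ← not_lt]
  exact ⟨fun h hlt => h _ hlt (e.apply_symm_apply i),
    fun h t' ht' hi => h (by rwa [← hi, e.symm_apply_apply])⟩

theorem isRTiebreakSMOSeq_of_inducedOrder_eq (r : I ≃ Fin (Fintype.card I))
    {e : Fin (Fintype.card I) ≃ I} (he : InducedOrder e = Tiebreak B r) :
    IsRTiebreakSMOSeq B r e := by
  have hlt : ∀ i j, e.symm i < e.symm j ↔ Tiebreak B r i j := fun i j => by rw [← he]; rfl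
  have hmax : ∀ t, e t ∈ MaximalSet B {i | t ≤ e.symm i} := by
    refine fun t => ⟨by simp, fun j hj _ hjt => ?_⟩
    have := (hlt j (e t)).2 (.inl hjt)
    simp only [Set.mem_ofPred_eq, Equiv.symm_apply_apply] at hj this
    exact hj.not_gt this
  simp only [IsRTiebreakSMOSeq, IsSMOSeq, setOf_forall_lt_apply_ne_eq]
  refine ⟨hmax, fun t i ⟨hti, himax⟩ => ?_⟩
  rcases (show t ≤ e.symm i from hti).eq_or_lt with heq | hlt'
  · rw [heq, e.apply_symm_apply]
  · rcases (hlt (e t) i).1 (by simpa using hlt') with hB | ⟨_, hr⟩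
    · exact absurd hB (himax _ (hmax t).1 (fun h => by simp [← h] at hlt'))
    · exact hr.le

theorem isExtension_tiebreak (hB : WeakOrderRel B) (r : I ≃ Fin (Fintype.card I)) :
    IsExtension B (Tiebreak B r) :=
  ⟨totalOrderRel_tiebreak hB r, fun _ _ => .inl⟩

theorem singleTiebreakProfile_tiebreak {S : Type*} {pr : S → I → I → Prop}
    (hpr : ∀ s, WeakOrderRel (pr s)) (r : I ≃ Fin (Fintype.card I)) :
    SingleTiebreakProfile pr fun s => Tiebreak (pr s) r := by
  refine ⟨r, fun s => ?_⟩
  obtain ⟨e, he⟩ := exists_inducedOrder_eq (totalOrderRel_tiebreak (hpr s) r)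
  exact ⟨e, isRTiebreakSMOSeq_of_inducedOrder_eq r he, he.symm⟩

end Tiebreak

theorem Function.periodicPts_nonempty {α : Type*} [Finite α] [Nonempty α] (f : α → α) :
    (Function.periodicPts f).Nonempty := by
  obtain ⟨a⟩ := ‹Nonempty α›
  obtain ⟨m, n, hne, heq⟩ := Finite.exists_ne_map_eq_of_infinite fun n => f^[n] a
  wlog hmn : m < n generalizing m n
  · exact this n m hne.symm heq.symm (hne.lt_or_gt.resolve_left hmn)
  refine ⟨_, Function.mk_mem_periodicPts (Nat.sub_pos_of_lt hmn) (x := f^[m] a) ?_⟩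
  rw [Function.IsPeriodicPt, Function.IsFixedPt, ← Function.iterate_add_apply,
    Nat.sub_add_cancel hmn.le, heq]

theorem Equiv.Perm.exists_of_transGen_self {I : Type*} [Finite I] {E : I → I → Prop} {x : I}
    (hx : TransGen E x x) :
    ∃ σ : Equiv.Perm I, (∃ i, E i (σ i)) ∧ ∀ i, σ i ≠ i → E i (σ i) := by
  classical
  set V := {i | TransGen E i i}
  have hsucc : ∀ i, ∃ j ∈ V, i ∈ V → E i j := by
    intro i
    by_cases hi : i ∈ V
    · obtain ⟨j, hij, hji⟩ := TransGen.head'_iff.1 hi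
      exact ⟨j, TransGen.tail' hji hij, fun _ => hij⟩
    · exact ⟨x, hx, fun h => absurd h hi⟩
  choose f hfV hfE using hsucc
  -- a periodic orbit of the successor map `f` lies in `V` and is a cycle of `E`
  have hper : ∀ i ∈ Function.periodicPts f, E i (f i) := fun i hi =>
    hfE i (Set.range_subset_iff.2 hfV (Function.periodicPts_subset_range hi))
  let σ := Equiv.Perm.ofSubtype ((Function.bijOn_periodicPts f).equiv f)
  have hσ : ∀ i ∈ Function.periodicPts f, σ i = f i := fun i hi =>
    Equiv.Perm.ofSubtype_apply_of_mem _ hi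
  have : Nonempty I := ⟨x⟩
  obtain ⟨i₀, hi₀⟩ := Function.periodicPts_nonempty f
  refine ⟨σ, ⟨i₀, hσ i₀ hi₀ ▸ hper i₀ hi₀⟩, fun i hi => ?_⟩
  have hmem : i ∈ Function.periodicPts f := by
    by_contra h
    exact hi (Equiv.Perm.ofSubtype_apply_of_not_mem _ h)
  exact hσ i hmem ▸ hper i hmem

section Exchange

variable {I S : Type*} {P : I → Option S → Option S → Prop}

theorem RPref.trans {p : Option S → Option S → Prop} (hp : StrictPref p) {a b c : Option S}
    (hab : RPref p a b) (hbc : RPref p b c) : RPref p a c := by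
  rcases hab with hab | rfl
  · exact .inl (hbc.elim (hp.2.1 hab) (· ▸ hab))
  · exact hbc

theorem RPref.antisymm {p : Option S → Option S → Prop} (hp : StrictPref p) {a b : Option S}
    (hab : RPref p a b) (hba : RPref p b a) : a = b :=
  hab.elim (fun h => hba.elim (fun h' => absurd h' (hp.1 _ _ h)) Eq.symm) id

def TiedEnvy (P : I → Option S → Option S → Prop) (pr : S → I → I → Prop) (μ : I → Option S)
    (i j : I) : Prop :=
  ∃ s, μ j = some s ∧ P i (some s) (μ i) ∧ ¬ pr s i j ∧ ¬ pr s j i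

variable {pr : S → I → I → Prop} {μ : I → Option S}

theorem TiedEnvy.prefers {i j : I} (h : TiedEnvy P pr μ i j) : P i (μ j) (μ i) := by
  obtain ⟨s, hs, hP, -⟩ := h
  rwa [hs]

theorem rpref_comp_perm {σ : Equiv.Perm I} (hσ : ∀ i, σ i ≠ i → TiedEnvy P pr μ i (σ i))
    (i : I) : RPref (P i) (μ (σ i)) (μ i) := by
  by_cases hi : σ i = i
  · exact .inr (by rw [hi])
  · exact .inl (hσ i hi).prefers

theorem ncard_comp_perm_eq (μ : I → Option S) (σ : Equiv.Perm I) (s : S) :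
    {i | μ (σ i) = some s}.ncard = {i | μ i = some s}.ncard :=
  Set.ncard_preimage_of_injective_subset_range (s := {i | μ i = some s}) σ.injective (by simp)

variable [Fintype I] {q : S → ℕ}

theorem IsMatching.comp_perm (hμ : IsMatching q μ) (σ : Equiv.Perm I) :
    IsMatching q (μ ∘ σ) := fun s => (ncard_comp_perm_eq μ σ s).trans_le (hμ s)

/-- Letting every student move into the seat she envies keeps a stable matching stable, since
by negative transitivity a student outranking `j` at `j`'s new school also outranks the student
whose seat `j` took. -/
theorem StableFor.comp_perm (hP : ∀ i, StrictPref (P i)) (hpr : ∀ s, NegTransitive (pr s))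
    (hμ : StableFor P q pr μ) {σ : Equiv.Perm I}
    (hσ : ∀ i, σ i ≠ i → TiedEnvy P pr μ i (σ i)) : StableFor P q pr (μ ∘ σ) := by
  obtain ⟨hIR, hNW, hFair⟩ := hμ
  have himp := rpref_comp_perm hσ
  refine ⟨fun i => (himp i).trans (hP i) (hIR i), fun i s hs => ?_, ?_⟩
  · rw [Function.comp_apply] at hs
    rw [← hNW i s ((himp i).elim ((hP i).2.1 hs) (· ▸ hs))]
    exact ncard_comp_perm_eq μ σ s
  · rintro ⟨i, j, s, hj, hi, hsi, hij⟩
    have hsi' : RPref (P i) (some s) (μ i) := hsi.trans (hP i) (himp i)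
    have hi' : μ i ≠ some s := fun h => hi (((himp i).antisymm (hP i) (h ▸ hsi)).trans h)
    have hij' : pr s i (σ j) := by
      by_cases hj' : σ j = j
      · rwa [hj']
      obtain ⟨s', hs', -, hjσj, hσjj⟩ := hσ j hj'
      obtain rfl : s' = s := Option.some.inj (hs'.symm.trans hj)
      exact by_contra fun h => hpr s' i (σ j) j h hσjj hij
    exact hFair ⟨i, σ j, s, hj, hi', hsi', hij'⟩

theorem IsSOSM.not_transGen_tiedEnvy (hP : ∀ i, StrictPref (P i))
    (hpr : ∀ s, NegTransitive (pr s)) (hμ : IsMatching q μ) (hsosm : IsSOSM P q pr μ) (x : I) :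
    ¬ TransGen (TiedEnvy P pr μ) x x := by
  intro hx
  obtain ⟨σ, ⟨i₀, hi₀⟩, hσ⟩ := Equiv.Perm.exists_of_transGen_self hx
  exact hsosm.2 ⟨μ ∘ σ, hμ.comp_perm σ, hsosm.1.comp_perm hP hpr hσ,
    rpref_comp_perm hσ, i₀, hi₀.prefers⟩

end Exchange

section Fairness

variable {I S : Type*} {P : I → Option S → Option S → Prop} {pr : S → I → I → Prop}
  {μ : I → Option S}

theorem Fair.mono {pr' : S → I → I → Prop} (h : Fair P pr' μ)
    (hle : ∀ s i j, pr s i j → pr' s i j) : Fair P pr μ :=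
  fun ⟨i, j, s, hj, hi, hsi, hij⟩ => h ⟨i, j, s, hj, hi, hsi, hle s i j hij⟩

theorem Fair.tiebreak [Fintype I] (hμ : Fair P pr μ) {r : I ≃ Fin (Fintype.card I)}
    (hr : ∀ i j, TiedEnvy P pr μ i j → r j < r i) :
    Fair P (fun s => Tiebreak (pr s) r) μ := by
  rintro ⟨i, j, s, hj, hi, hsi, hij | ⟨hji, hrij⟩⟩
  · exact hμ ⟨i, j, s, hj, hi, hsi, hij⟩
  · by_cases hij : pr s i j
    · exact hμ ⟨i, j, s, hj, hi, hsi, hij⟩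
    · exact (hr i j ⟨s, hj, hsi.resolve_right (Ne.symm hi), hij, hji⟩).not_gt hrij

theorem IsSOSM.of_le [Fintype I] {q : S → ℕ} {pr' : S → I → I → Prop}
    (hsosm : IsSOSM P q pr μ) (hle : ∀ s i j, pr s i j → pr' s i j) (hfair : Fair P pr' μ) :
    IsSOSM P q pr' μ := by
  obtain ⟨⟨hIR, hNW, -⟩, hopt⟩ := hsosm
  refine ⟨⟨hIR, hNW, hfair⟩, fun ⟨μ', hμ', ⟨hIR', hNW', hfair'⟩, hdom⟩ => ?_⟩
  exact hopt ⟨μ', hμ', ⟨hIR', hNW', hfair'.mono hle⟩, hdom⟩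

end Fairness

theorem sosm_via_single_tiebreaking_general {I S : Type*} [Fintype I]
    (P : I → Option S → Option S → Prop) (hP : ∀ i, StrictPref (P i))
    (q : S → ℕ)
    (pr : S → I → I → Prop) (hpr : ∀ s, WeakOrderRel (pr s))
    (μ : I → Option S) (hμ : IsMatching q μ) (hsosm : IsSOSM P q pr μ) :
    ∃ pr' : S → I → I → Prop, IsExtensionProfile pr pr' ∧
      SingleTiebreakProfile pr pr' ∧ IsSOSM P q pr' μ := by
  have hacyclic : ∀ x, ¬ TransGen (flip (TiedEnvy P pr μ)) x x := fun x hx =>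
    hsosm.not_transGen_tiedEnvy hP (fun s => (hpr s).2) hμ x (transGen_swap.1 hx)
  obtain ⟨r, hr⟩ := exists_equiv_fin_lt_of_acyclic hacyclic
  have hfair : Fair P (fun s => Tiebreak (pr s) r) μ :=
    hsosm.1.2.2.tiebreak fun i j hij => hr j i hij
  exact ⟨fun s => Tiebreak (pr s) r, fun s => isExtension_tiebreak (hpr s) r,
    singleTiebreakProfile_tiebreak hpr r, hsosm.of_le (fun _ _ _ => .inl) hfair⟩

/-- Corollary 4: with weak order priorities, every SOSM for `pr` is an SOSM for
some extension profile of `pr` obtained by a single tiebreaking rule. -/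
theorem sosm_via_single_tiebreaking {I S : Type*} [Fintype I] [Fintype S]
    (hI : 3 ≤ Fintype.card I)
    (P : I → Option S → Option S → Prop) (hP : ∀ i, StrictPref (P i))
    (q : S → ℕ) (hq : ∀ s, 1 ≤ q s)
    (pr : S → I → I → Prop) (hpr : ∀ s, WeakOrderRel (pr s))
    (μ : I → Option S) (hμ : IsMatching q μ) (hsosm : IsSOSM P q pr μ) :
    ∃ pr' : S → I → I → Prop, IsExtensionProfile pr pr' ∧
      SingleTiebreakProfile pr pr' ∧ IsSOSM P q pr' μ :=
  sosm_via_single_tiebreaking_general P hP q pr hpr μ hμ hsosm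
end

section
/- If ≻_s is acyclic for every s ∈ S, then for every correspondence C assigning to each s ∈ S a set C(s) ⊆ I × I, there exists a matching that is partially stable for (≻, C). -/
/-! Each acyclic priority `pr s` extends to a strict total order, encoded by an injective key.
Deferred acceptance against these keys yields an individually rational, non-wasteful matching
in which no student prefers a school held by someone of lower key there. As the keys extend
`pr s`, that matching violates no priority of `pr` at all, so it is partially stable for every
`C`. -/

open Finset Function

lemma exists_chain_of_reflTransGen {I : Type*} {B : I → I → Prop} {a b : I}
    (h : Relation.ReflTransGen B a b) :
    ∃ (K : ℕ) (x : ℕ → I), x 0 = a ∧ x K = b ∧ ∀ k, 1 ≤ k → k ≤ K → B (x (k - 1)) (x k) := by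
  induction h with
  | refl => exact ⟨0, fun _ => a, rfl, rfl, fun k hk hK => by omega⟩
  | @tail b c _ hbc ih =>
    obtain ⟨K, x, hx0, hxK, hchain⟩ := ih
    refine ⟨K + 1, update x (K + 1) c, by simp [hx0], by simp, fun k hk hK => ?_⟩
    rcases Nat.lt_or_ge k (K + 1) with hlt | hge
    · simpa [update_of_ne (by omega : k ≠ K + 1), update_of_ne (by omega : k - 1 ≠ K + 1)]
        using hchain k hk (by omega)
    · obtain rfl : k = K + 1 := by omega
      simpa [hxK] using hbc

lemma AcyclicRel.not_transGen_self_s16 {I : Type*} {B : I → I → Prop} (h : AcyclicRel B) (i : I) :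
    ¬ Relation.TransGen B i i := by
  rintro hii
  obtain ⟨b, hib, hbi⟩ := Relation.TransGen.tail'_iff.1 hii
  obtain ⟨K, x, hx0, hxK, hchain⟩ := exists_chain_of_reflTransGen hib
  rcases Nat.eq_zero_or_pos K with rfl | hK
  · rw [← hxK, hx0] at hbi
    exact h ⟨1, fun _ => i, le_rfl, fun _ _ _ => hbi, hbi⟩
  · exact h ⟨K, x, hK, hchain, by rwa [hxK, hx0]⟩

/-- Rank by the number of `B`-predecessors in the transitive closure, ties broken by an
enumeration of `I`. -/
lemma AcyclicRel.exists_injective_strictMono_key {I : Type*} [Fintype I] {B : I → I → Prop}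
    (h : AcyclicRel B) : ∃ k : I → ℕ ×ₗ ℕ, Injective k ∧ ∀ i j, B i j → k i < k j := by
  classical
  refine ⟨fun i => toLex (#{j | Relation.TransGen B j i}, (Fintype.equivFin I i : ℕ)),
    fun i j hij => (Fintype.equivFin I).injective (Fin.ext (congrArg (·.2) hij)),
    fun i j hij => Prod.Lex.toLex_lt_toLex.2 (Or.inl (card_lt_card ?_))⟩
  refine ssubset_iff_of_subset (fun c hc => ?_) |>.2 ⟨i, ?_, ?_⟩
  · simp only [mem_filter, mem_univ, true_and] at hc ⊢
    exact hc.tail hij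
  · simpa using Relation.TransGen.single hij
  · simpa using h.not_transGen_self_s16 i

lemma StrictPref.exists_best {S : Type*} [Finite S] {p : Option S → Option S → Prop}
    (hp : StrictPref p) (A : Finset S) :
    ∃ o : Option S, (∀ s, o = some s → s ∉ A) ∧ RPref p o none ∧ ∀ s ∉ A, ¬ p (some s) o := by
  have : IsTrans _ p := ⟨fun _ _ _ hab hbc => hp.2.1 hab hbc⟩
  have : Std.Irrefl p := ⟨fun a h => hp.1 a a h h⟩
  obtain ⟨o, ho, hbest⟩ := (Finite.wellFounded_of_trans_of_irrefl p).has_min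
    {o | ∀ s, o = some s → s ∉ A} ⟨none, by simp⟩
  refine ⟨o, ho, ?_, fun s hs => hbest (some s) (by simpa using hs)⟩
  by_cases hnone : o = none
  · exact Or.inr hnone
  · exact Or.inl ((hp.2.2 o none hnone).resolve_right (hbest none (by simp)))

namespace DeferredAcceptance

variable {I S κ : Type*} [Fintype I] [DecidableEq S] [LinearOrder κ]
  {d : I → Finset S → Option S} {k : S → I → κ} {q : S → ℕ}

/-- `R i` is the set of schools that have rejected `i`, `d i (R i)` is `i`'s current proposal,
and a smaller key `k s j` means a higher priority at `s`. -/
def proposers (d : I → Finset S → Option S) (R : I → Finset S) (s : S) : Finset I :=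
  {j | d j (R j) = some s}

def JustifiedRejections (d : I → Finset S → Option S) (k : S → I → κ) (q : S → ℕ)
    (R : I → Finset S) : Prop :=
  ∀ i s, s ∈ R i → q s ≤ #{j ∈ proposers d R s | k s j < k s i}

def RespectsCapacity (d : I → Finset S → Option S) (q : S → ℕ) (R : I → Finset S) : Prop :=
  ∀ s, #(proposers d R s) ≤ q s

/-- An over-subscribed school rejects its lowest-priority proposer. -/
lemma exists_justified_of_lt_card_proposers [DecidableEq I]
    (hd : ∀ i A s, d i A = some s → s ∉ A) (hk : ∀ s, Injective (k s))
    {R : I → Finset S} (hR : JustifiedRejections d k q R) {s : S}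
    (hs : q s < #(proposers d R s)) :
    ∃ R', JustifiedRejections d k q R' ∧ ∑ i, #(R i) < ∑ i, #(R' i) := by
  set T := proposers d R s
  obtain ⟨i₀, hi₀T, hi₀max⟩ := T.exists_max_image (k s) (card_pos.1 (by omega))
  have hi₀ : d i₀ (R i₀) = some s := (mem_filter.1 hi₀T).2
  set R' := update R i₀ (insert s (R i₀))
  have hR'_ne : ∀ j ≠ i₀, R' j = R j := fun j hj => update_of_ne hj _ _
  have hmono : ∀ t i, i₀ ∉ {j ∈ proposers d R t | k t j < k t i} →
      {j ∈ proposers d R t | k t j < k t i} ⊆ {j ∈ proposers d R' t | k t j < k t i} := by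
    intro t i hi₀ j hj
    have hji₀ : j ≠ i₀ := by rintro rfl; exact hi₀ hj
    simpa [proposers, hR'_ne j hji₀] using hj
  have herase : ∀ i, k s i₀ ≤ k s i → T.erase i₀ ⊆ {j ∈ proposers d R' s | k s j < k s i} := by
    intro i hi j hj
    obtain ⟨hji₀, hjT⟩ := mem_erase.1 hj
    have hlt : k s j < k s i₀ := (hi₀max j hjT).lt_of_ne ((hk s).ne hji₀)
    simpa [proposers, hR'_ne j hji₀, hlt.trans_le hi] using (mem_filter.1 hjT).2
  refine ⟨R', fun i t ht => ?_, sum_lt_sum (fun i _ => ?_) ⟨i₀, mem_univ _, ?_⟩⟩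
  · by_cases hnew : t = s ∧ k s i₀ ≤ k s i
    · obtain ⟨rfl, hle⟩ := hnew
      calc q t ≤ #(T.erase i₀) := by rw [card_erase_of_mem hi₀T]; omega
        _ ≤ _ := card_le_card (herase i hle)
    · have htR : t ∈ R i := by
        by_cases hi : i = i₀
        · subst hi
          simp only [R', update_self, mem_insert] at ht
          exact ht.resolve_left fun hts => hnew ⟨hts, le_rfl⟩
        · rwa [hR'_ne i hi] at ht
      refine (hR i t htR).trans (card_le_card (hmono t i fun hmem => hnew ?_))
      obtain ⟨hprop, hlt⟩ := mem_filter.1 hmem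
      have hts : s = t := Option.some_injective _ (hi₀.symm.trans (mem_filter.1 hprop).2)
      exact ⟨hts.symm, hts ▸ hlt.le⟩
  · by_cases hi : i = i₀
    · subst hi; simpa [R'] using card_le_card (subset_insert s (R i))
    · rw [hR'_ne i hi]
  · simp [R', card_insert_of_notMem (hd _ _ _ hi₀)]

/-- Deferred acceptance terminates: take the rejection state with the most rejections. -/
theorem exists_justified_respectsCapacity [Fintype S] [DecidableEq I]
    (hd : ∀ i A s, d i A = some s → s ∉ A) (hk : ∀ s, Injective (k s)) :
    ∃ R, JustifiedRejections d k q R ∧ RespectsCapacity d q R := by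
  classical
  obtain ⟨R, hR, hmax⟩ :=
    ({R | JustifiedRejections d k q R} : Finset (I → Finset S)).exists_max_image
      (fun R => ∑ i, #(R i)) ⟨fun _ => ∅, mem_filter.2 ⟨mem_univ _, fun i s hs => by simp at hs⟩⟩
  refine ⟨R, (mem_filter.1 hR).2, fun s => ?_⟩
  by_contra! hs
  obtain ⟨R', hR', hlt⟩ := exists_justified_of_lt_card_proposers hd hk (mem_filter.1 hR).2 hs
  exact (hmax R' (by simpa using hR')).not_gt hlt

lemma filter_key_lt_eq_proposers {R : I → Finset S} (hR : JustifiedRejections d k q R)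
    (hcap : RespectsCapacity d q R) {i : I} {s : S} (hs : s ∈ R i) :
    {j ∈ proposers d R s | k s j < k s i} = proposers d R s :=
  eq_of_subset_of_card_le (filter_subset _ _) ((hcap s).trans (hR i s hs))

end DeferredAcceptance

open DeferredAcceptance in
theorem exists_stable_matching_of_injective_keys {I S κ : Type*} [Fintype I] [Fintype S]
    [LinearOrder κ] (P : I → Option S → Option S → Prop) (hP : ∀ i, StrictPref (P i))
    (q : S → ℕ) (k : S → I → κ) (hk : ∀ s, Injective (k s)) :
    ∃ μ : I → Option S, IsMatching q μ ∧ IndividuallyRational P μ ∧ NonWasteful P q μ ∧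
      ∀ i j s, μ j = some s → P i (some s) (μ i) → k s j < k s i := by
  classical
  choose best hbest_avail hbest_ir hbest_max using fun i => (hP i).exists_best
  obtain ⟨R, hR, hcap⟩ := exists_justified_respectsCapacity (q := q) hbest_avail hk
  have hcard : ∀ s, {i | best i (R i) = some s}.ncard = #(proposers best R s) := fun s => by
    rw [Set.ncard_eq_toFinset_card', Set.toFinset_ofPred, proposers]
  have hrej : ∀ i s, P i (some s) (best i (R i)) → s ∈ R i :=
    fun i s h => by_contra fun hs => hbest_max i _ s hs h
  refine ⟨fun i => best i (R i), fun s => (hcard s).trans_le (hcap s), fun i => hbest_ir i _,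
    fun i s h => ?_, fun i j s hj h => ?_⟩
  · exact (hcard s).trans
      (le_antisymm (hcap s) ((hR i s (hrej i s h)).trans (card_filter_le _ _)))
  · have hj : j ∈ proposers best R s := by simpa [proposers] using hj
    rw [← filter_key_lt_eq_proposers hR hcap (hrej i s h)] at hj
    exact (mem_filter.1 hj).2

theorem exists_partially_stable_general {I S : Type*} [Fintype I] [Fintype S]
    (P : I → Option S → Option S → Prop) (hP : ∀ i, StrictPref (P i))
    (q : S → ℕ)
    (pr : S → I → I → Prop)
    (hacyc : ∀ s, AcyclicRel (pr s))
    (C : S → I → I → Prop) :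
    ∃ μ : I → Option S, IsMatching q μ ∧ PartiallyStable P q pr C μ := by
  choose k hk_inj hk_mono using fun s => (hacyc s).exists_injective_strictMono_key
  obtain ⟨μ, hμ, hir, hnw, hfair⟩ := exists_stable_matching_of_injective_keys P hP q k hk_inj
  exact ⟨μ, hμ, hir, hnw, fun i j s hj hi hpr =>
    absurd (hk_mono s i j hpr) (hfair i j s hj hi).not_gt⟩

/-- Corollary 7: if every priority relation is acyclic, then for every
correspondence `C` there exists a partially stable matching for `(pr, C)`. -/
theorem exists_partially_stable {I S : Type*} [Fintype I] [Fintype S]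
    (hI : 3 ≤ Fintype.card I)
    (P : I → Option S → Option S → Prop) (hP : ∀ i, StrictPref (P i))
    (q : S → ℕ) (hq : ∀ s, 1 ≤ q s)
    (pr : S → I → I → Prop)
    (hasym : ∀ s, Asymm (pr s)) (hacyc : ∀ s, AcyclicRel (pr s))
    (C : S → I → I → Prop) :
    ∃ μ : I → Option S, IsMatching q μ ∧ PartiallyStable P q pr C μ :=
  exists_partially_stable_general P hP q pr hacyc C
end
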